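/- Transactions committed in the lock-free commit phase are pairwise conflict-free: if t ≠ t' are both committed in the lock-free phase, then RW(t) ∩ RW(t') = ∅. -/
import Mathlib

/-- Transactions committed in the lock-free commit phase are pairwise
conflict-free. `T` is the epoch's finite set of transactions, `TID` assigns
distinct transaction IDs, `RW` gives each transaction's finite read/write set
of keys, and a transaction commits in the lock-free phase iff for every key
in its RW set every other transaction of the epoch touching that key has a
strictly larger TID. Then two distinct lock-free-committed transactions have
disjoint RW sets. -/
theorem lock_free_committed_conflict_free
    {τ K : Type*} [DecidableEq K]
    (T : Finset τ) (TID : τ → ℕ)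
    (hTID : ∀ t ∈ T, ∀ t' ∈ T, TID t = TID t' → t = t')
    (RW : τ → Finset K) (committed : τ → Prop)
    (hcommit : ∀ t ∈ T,
      (committed t ↔
        ∀ k ∈ RW t, ∀ t' ∈ T, t' ≠ t → k ∈ RW t' → TID t < TID t'))
    (t t' : τ) (ht : t ∈ T) (ht' : t' ∈ T) (hne : t ≠ t')
    (hct : committed t) (hct' : committed t') :
    RW t ∩ RW t' = ∅ := by
  rw [Finset.eq_empty_iff_forall_notMem]
  intro k hk
  simp only [Finset.mem_inter] at hk
  have h1 := (hcommit t ht).mp hct k hk.1 t' ht' hne.symm hk.2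
  have h2 := (hcommit t' ht').mp hct' k hk.2 t ht hne hk.1
  omega
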